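/- arXiv:1511.08318 — 4 statements merged into one kernel-verified Lean document; each statement's English description precedes it below -/
import Mathlib

section
/- Let F be a field of characteristic p with a discrete valuation v, and let λ ∈ F satisfy v(λ − 1) = r with 0 < r < ∞. Then for every positive integer k, v(λ^k − 1) = r·p^(v_p(k)), where v_p(k) denotes the p-adic valuation of k. -/
/-!
Write `k = p^e m` with `p ∤ m`. In characteristic `p` Frobenius gives
`λ^(p^e) - 1 = (λ - 1)^(p^e)`, of valuation `p^e r`. For `μ` with `v(μ - 1) > 0` and `p ∤ m`,
`μ^m - 1 = (μ - 1)(m + ∑_{i<m} (μ^i - 1))`, where the second factor has valuation 0: `m` is a unit of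
the prime field `𝔽_p`, on which every valuation is trivial, and the sum has positive valuation.
-/

namespace AddValuation

variable {Γ₀ : Type*} [LinearOrderedAddCommMonoidWithTop Γ₀]

theorem map_natCast_eq_zero_of_not_dvd {R : Type*} [Ring R] (p : ℕ) [Fact p.Prime] [CharP R p]
    (v : AddValuation R Γ₀) {n : ℕ} (hn : ¬ p ∣ n) : v (n : R) = 0 := by
  let := ZMod.algebra R p
  have hn' : (n : ZMod p) ≠ 0 := by rwa [Ne, ZMod.natCast_eq_zero_iff]
  have := FiniteField.valuation_algebraMap_eq_one (A := R) v (n : ZMod p) hn'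
  rw [map_natCast] at this
  exact this

variable {R : Type*} [CommRing R] (v : AddValuation R Γ₀)

theorem map_sub_one_le_map_pow_sub_one {μ : R} (hμ : 0 ≤ v μ) (n : ℕ) :
    v (μ - 1) ≤ v (μ ^ n - 1) := by
  rw [← geom_sum_mul, map_mul]
  refine le_add_of_nonneg_left (map_le_sum v fun i _ => ?_)
  rw [map_pow]
  exact nsmul_nonneg hμ i

theorem map_pow_sub_one_of_map_natCast_eq_zero {μ : R} {m : ℕ} (hm : v (m : R) = 0)
    (hμ : 0 < v (μ - 1)) : v (μ ^ m - 1) = v (μ - 1) := by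
  have hμ_int : 0 ≤ v μ := by
    simpa [min_eq_left hμ.le] using map_add v 1 (μ - 1)
  have hsum : ∑ i ∈ Finset.range m, μ ^ i = m + ∑ i ∈ Finset.range m, (μ ^ i - 1) := by
    simp [Finset.sum_sub_distrib]
  have htail : 0 < v (∑ i ∈ Finset.range m, (μ ^ i - 1)) :=
    map_lt_sum' v (hμ.trans_le le_top) fun i _ =>
      hμ.trans_le (map_sub_one_le_map_pow_sub_one v hμ_int i)
  have hunit : v (∑ i ∈ Finset.range m, μ ^ i) = 0 := by
    rw [hsum, map_add_eq_of_lt_left v (hm ▸ htail), hm]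
  rw [← geom_sum_mul, map_mul, hunit, zero_add]

theorem map_pow_char_pow_sub_one (p : ℕ) [ExpChar R p] (μ : R) (e : ℕ) :
    v (μ ^ p ^ e - 1) = p ^ e • v (μ - 1) := by
  rw [← map_pow, sub_pow_expChar_pow, one_pow]

end AddValuation

/-- If `F` has characteristic `p` with discrete valuation `v` and `v(λ - 1) = r` with
`0 < r < ∞`, then for every `k ≥ 1`, `v(λ^k - 1) = r * p^(v_p k)`. -/
theorem stmt1 (F : Type*) [Field F] (p : ℕ) [Fact p.Prime] [CharP F p]
    (v : AddValuation F (WithTop ℤ)) (lam : F) (r : ℤ) (hr : 0 < r)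
    (hv : v (lam - 1) = (r : WithTop ℤ)) (k : ℕ) (hk : 0 < k) :
    v (lam ^ k - 1) = ((r * p ^ padicValNat p k : ℤ) : WithTop ℤ) := by
  have hp : p.Prime := Fact.out
  obtain ⟨e, m, hpm, rfl⟩ := Nat.exists_eq_pow_mul_and_not_dvd hk.ne' p hp.ne_one
  have he : padicValNat p (p ^ e * m) = e := by
    rw [padicValNat.mul (pow_ne_zero e hp.ne_zero) (by rintro rfl; simp at hpm),
      padicValNat.prime_pow, padicValNat.eq_zero_of_not_dvd hpm, add_zero]
  have hfrob : v (lam ^ p ^ e - 1) = ((r * p ^ e : ℤ) : WithTop ℤ) := by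
    rw [v.map_pow_char_pow_sub_one p, hv, ← WithTop.coe_nsmul, nsmul_eq_mul, mul_comm]
    push_cast; rfl
  have hpos : 0 < v (lam ^ p ^ e - 1) := by
    rw [hfrob]
    exact_mod_cast mul_pos hr (pow_pos (Int.natCast_pos.mpr hp.pos) e)
  rw [he, pow_mul, v.map_pow_sub_one_of_map_natCast_eq_zero
    (v.map_natCast_eq_zero_of_not_dvd p hpm) hpos, hfrob]
end

section
/- Let F be a field of characteristic p with discrete valuation v and λ ∈ F with v(λ − 1) = r, 0 < r < ∞. Then for every n > r, the quantity m_n(λ) = min{k ≥ 1 : v(λ^k − 1) ≥ n} satisfies m_n(λ) < (p/r)·n; in particular the sequence (m_n(λ))_n grows at most linearly in n. -/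
/-!
In characteristic `p` the Frobenius gives `λ ^ p ^ j - 1 = (λ - 1) ^ p ^ j`, so
`v (λ ^ p ^ j - 1) = p ^ j * r`. Taking the least `j` with `p ^ j * r ≥ n`, the exponent `p ^ j`
already lies in the set defining `m_n(λ)`, and minimality of `j` gives `p ^ j * r < p * n`.
-/

theorem AddValuation.map_pow_expChar_pow_sub_one {R Γ₀ : Type*} [CommRing R]
    [LinearOrderedAddCommMonoidWithTop Γ₀] {p : ℕ} [ExpChar R p] (v : AddValuation R Γ₀)
    (x : R) (j : ℕ) : v (x ^ p ^ j - 1) = p ^ j • v (x - 1) := by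
  rw [← v.map_pow, sub_pow_expChar_pow, one_pow]

theorem Int.exists_pow_mul_mem_Ico {b r n : ℤ} (hb : 1 < b) (hr : 0 < r) (hrn : r ≤ n) :
    ∃ j : ℕ, n ≤ b ^ j * r ∧ b ^ j * r < b * n := by
  have hex : ∃ j : ℕ, n ≤ b ^ j * r := by
    obtain ⟨j, hj⟩ := pow_unbounded_of_one_lt n hb
    exact ⟨j, hj.le.trans (le_mul_of_one_le_right (by positivity) hr)⟩
  refine ⟨Nat.find hex, Nat.find_spec hex, ?_⟩
  rcases h : Nat.find hex with _ | i
  · nlinarith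
  · have hi : b ^ i * r < n := not_le.mp (Nat.find_min hex (by omega))
    rw [pow_succ']
    nlinarith

/-- Linear growth: with `v(λ - 1) = r`, `0 < r < ∞`, for `n > r` the quantity
`m_n(λ) = min {k ≥ 1 : v(λ^k - 1) ≥ n}` satisfies `m_n(λ) < (p/r)·n`,
stated as `r · m_n(λ) < p · n`. -/
theorem stmt4 (F : Type*) [Field F] (p : ℕ) [Fact p.Prime] [CharP F p]
    (v : AddValuation F (WithTop ℤ)) (lam : F) (r : ℤ) (hr : 0 < r)
    (hv : v (lam - 1) = (r : WithTop ℤ)) (n : ℤ) (hn : r < n) :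
    r * ((sInf {k : ℕ | 0 < k ∧ (n : WithTop ℤ) ≤ v (lam ^ k - 1)} : ℕ) : ℤ) < p * n := by
  have hp : p.Prime := Fact.out
  obtain ⟨j, hnj, hjn⟩ := Int.exists_pow_mul_mem_Ico (b := p) (mod_cast hp.one_lt) hr hn.le
  have hmem : p ^ j ∈ {k : ℕ | 0 < k ∧ (n : WithTop ℤ) ≤ v (lam ^ k - 1)} := by
    refine ⟨pow_pos hp.pos j, ?_⟩
    rw [v.map_pow_expChar_pow_sub_one, hv, ← WithTop.coe_nsmul, nsmul_eq_mul]
    exact_mod_cast hnj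
  calc r * ((sInf {k : ℕ | 0 < k ∧ (n : WithTop ℤ) ≤ v (lam ^ k - 1)} : ℕ) : ℤ)
      ≤ r * (p : ℤ) ^ j := by gcongr; exact_mod_cast Nat.sInf_le hmem
    _ = (p : ℤ) ^ j * r := mul_comm _ _
    _ < p * n := hjn
end

section
/- Let K = 𝔽_q(Y), let v_∞ be the valuation on K with v_∞(f) = −deg(f) for nonzero polynomials f ∈ 𝔽_q[Y], and for each monic irreducible polynomial π let v_π be the π-adic valuation with associated absolute value |x|_π = q^(−deg(π)·v_π(x)) and |x|_∞ = q^(−v_∞(x)). Then for every nonzero x ∈ K, the product of |x|_∞ and all |x|_π over monic irreducible π equals 1 (equivalently, deg(f) = Σ_π deg(π)·v_π(f) for nonzero f ∈ 𝔽_q[Y]). -/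
open Polynomial UniqueFactorizationMonoid

theorem Polynomial.natDegree_eq_of_associated {R : Type*} [CommSemiring R] [NoZeroDivisors R]
    {p q : R[X]} (h : Associated p q) : p.natDegree = q.natDegree := by
  obtain ⟨u, rfl⟩ := h
  nontriviality R
  rcases eq_or_ne p 0 with rfl | hp
  · simp
  rw [natDegree_mul hp u.ne_zero, natDegree_coe_units, add_zero]

theorem Polynomial.natDegree_eq_sum_natDegree_factors {R : Type*} [CommRing R] [IsDomain R]
    [UniqueFactorizationMonoid R[X]] {f : R[X]} (hf : f ≠ 0) :
    f.natDegree = ((factors f).map natDegree).sum := by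
  rw [← natDegree_multiset_prod _ fun h ↦ (irreducible_of_factor 0 h).ne_zero rfl]
  exact (natDegree_eq_of_associated (factors_prod hf)).symm

theorem stmt8_general (Fq : Type*) [Field Fq] (f : Polynomial Fq) (hf : f ≠ 0) :
    f.natDegree =
      ((UniqueFactorizationMonoid.factors f).map Polynomial.natDegree).sum :=
  natDegree_eq_sum_natDegree_factors hf

/-- Product formula for `𝔽_q(Y)`, in its equivalent form: for every nonzero polynomial
`f ∈ 𝔽_q[Y]`, `deg f = Σ_π deg(π)·v_π(f)`, i.e. the degree of `f` is the sum of the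
degrees of its irreducible factors counted with multiplicity. -/
theorem stmt8 (Fq : Type*) [Field Fq] [Fintype Fq] (f : Polynomial Fq) (hf : f ≠ 0) :
    f.natDegree =
      ((UniqueFactorizationMonoid.factors f).map Polynomial.natDegree).sum :=
  stmt8_general Fq f hf
end

section
/- Let p be a prime, n a positive integer with base-p expansion n = Σ_{i=0}^s a_i p^i, and let R be a commutative ring of characteristic p with an ideal I. Then for every x ∈ I, (1+x)^n − 1 ∈ I^(p^(v_p(n))), where v_p(n) is the p-adic valuation of n. Moreover if I is the maximal ideal of a discrete valuation ring of characteristic p and x has valuation exactly r > 0 and the lowest digit a_{v_p(n)} ≠ 0, then (1+x)^n − 1 has valuation exactly r·p^(v_p(n)). -/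
/-!
In characteristic `p` the Frobenius gives `(1 + x) ^ (p ^ k) = 1 + x ^ (p ^ k)`, so writing
`n = p ^ k * m` with `k = v_p(n)` and `p ∤ m` we get
`(1 + x) ^ n - 1 = (1 + x ^ (p ^ k)) ^ m - 1 = x ^ (p ^ k) * (m + x ^ (p ^ k) * z)`.
This lies in `I ^ (p ^ k)` whenever `x ∈ I`. In a DVR with `x` in the maximal
ideal, the cofactor `m + x ^ (p ^ k) * z` is a unit because `m` is, so the valuation of
`(1 + x) ^ n - 1` is exactly `p ^ k` times that of `x`.
-/

open IsDiscreteValuationRing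

theorem exists_one_add_pow_sub_one_eq_mul {R : Type*} [CommRing R] (y : R) (m : ℕ) :
    ∃ z : R, (1 + y) ^ m - 1 = y * (m + y * z) := by
  induction m with
  | zero => exact ⟨0, by simp⟩
  | succ m ih =>
    obtain ⟨z, hz⟩ := ih
    refine ⟨z + m + y * z, ?_⟩
    rw [pow_succ, eq_add_of_sub_eq hz]
    push_cast
    ring

theorem exists_one_add_pow_sub_one_eq_of_expChar {R : Type*} [CommRing R] (p : ℕ) [ExpChar R p]
    (x : R) (k m : ℕ) :
    ∃ z : R, (1 + x) ^ (p ^ k * m) - 1 = x ^ p ^ k * (m + x ^ p ^ k * z) := by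
  rw [pow_mul, add_pow_expChar_pow, one_pow]
  exact exists_one_add_pow_sub_one_eq_mul _ m

theorem one_add_pow_sub_one_mem_ideal_pow {R : Type*} [CommRing R] (p : ℕ) [ExpChar R p]
    {I : Ideal R} {x : R} (hx : x ∈ I) {k n : ℕ} (hkn : p ^ k ∣ n) :
    (1 + x) ^ n - 1 ∈ I ^ p ^ k := by
  obtain ⟨m, rfl⟩ := hkn
  obtain ⟨z, hz⟩ := exists_one_add_pow_sub_one_eq_of_expChar p x k m
  rw [hz]
  exact Ideal.mul_mem_right _ _ (Ideal.pow_mem_pow hx _)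

theorem IsLocalRing.isUnit_add_of_mem_maximalIdeal {O : Type*} [CommRing O] [IsLocalRing O]
    {a y : O} (ha : IsUnit a) (hy : y ∈ maximalIdeal O) : IsUnit (a + y) := by
  by_contra h
  have hmem : a + y - y ∈ maximalIdeal O := Ideal.sub_mem _ h hy
  exact (mem_maximalIdeal _).1 (by simpa using hmem) ha

section DVR

variable {O : Type*} [CommRing O] [IsDomain O] [IsDiscreteValuationRing O]

theorem IsDiscreteValuationRing.mem_maximalIdeal_pow_iff {x : O} {r : ℕ} :
    x ∈ IsLocalRing.maximalIdeal O ^ r ↔ (r : ℕ∞) ≤ addVal O x := by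
  obtain ⟨ϖ, hϖ⟩ := exists_irreducible O
  rw [hϖ.maximalIdeal_eq, Ideal.span_singleton_pow, Ideal.mem_span_singleton,
    ← addVal_le_iff_dvd, hϖ.addVal_pow]

theorem IsDiscreteValuationRing.addVal_eq_natCast_iff {x : O} {r : ℕ} :
    addVal O x = r ↔
      x ∈ IsLocalRing.maximalIdeal O ^ r ∧ x ∉ IsLocalRing.maximalIdeal O ^ (r + 1) := by
  rw [mem_maximalIdeal_pow_iff, mem_maximalIdeal_pow_iff, Nat.cast_succ,
    ENat.add_one_le_iff (ENat.natCast_ne_top r), not_lt, le_antisymm_iff, and_comm]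

theorem IsDiscreteValuationRing.addVal_one_add_pow_sub_one {p : ℕ} (hp : p.Prime) [CharP O p]
    {n : ℕ} (hn : n ≠ 0) {x : O} (hx : x ∈ IsLocalRing.maximalIdeal O) :
    addVal O ((1 + x) ^ n - 1) = p ^ padicValNat p n • addVal O x := by
  have := Fact.mk hp
  set m := n.divMaxPow p
  obtain ⟨z, hz⟩ := exists_one_add_pow_sub_one_eq_of_expChar p x (padicValNat p n) m
  have hm : IsUnit (m : O) := (CharP.isUnit_natCast_iff hp).2 (Nat.not_dvd_divMaxPow hp.one_lt hn)
  have hxz : x ^ p ^ padicValNat p n * z ∈ IsLocalRing.maximalIdeal O :=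
    Ideal.mul_mem_right _ _ (Ideal.pow_mem_of_mem _ hx _ (pow_pos hp.pos _))
  conv_lhs => rw [← Nat.pow_padicValNat_mul_divMaxPow p n]
  rw [hz, addVal_mul, addVal_pow,
    addVal_eq_zero_iff.2 (IsLocalRing.isUnit_add_of_mem_maximalIdeal hm hxz), add_zero]

end DVR

/-- For `R` of characteristic `p`, an ideal `I` and `x ∈ I`: `(1+x)^n − 1 ∈ I^(p^(v_p n))`.
Moreover, in a DVR of characteristic `p`, if `x` has valuation exactly `r > 0`, then
`(1+x)^n − 1` has valuation exactly `r·p^(v_p n)`. -/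
theorem stmt15 (p : ℕ) (hp : p.Prime) (R : Type*) [CommRing R] [CharP R p] (I : Ideal R)
    (O : Type*) [CommRing O] [IsDomain O] [IsDiscreteValuationRing O] [CharP O p]
    (n : ℕ) (hn : 0 < n) :
    (∀ x ∈ I, (1 + x) ^ n - 1 ∈ I ^ (p ^ padicValNat p n)) ∧
    (∀ (x : O) (r : ℕ), 0 < r →
      x ∈ (IsLocalRing.maximalIdeal O) ^ r →
      x ∉ (IsLocalRing.maximalIdeal O) ^ (r + 1) →
      ((1 + x) ^ n - 1 ∈ (IsLocalRing.maximalIdeal O) ^ (r * p ^ padicValNat p n) ∧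
       (1 + x) ^ n - 1 ∉ (IsLocalRing.maximalIdeal O) ^ (r * p ^ padicValNat p n + 1))) := by
  have := Fact.mk hp
  refine ⟨fun x hx => one_add_pow_sub_one_mem_ideal_pow p hx pow_padicValNat_dvd, ?_⟩
  intro x r hr hxr hxr1
  have hx : addVal O x = r := addVal_eq_natCast_iff.2 ⟨hxr, hxr1⟩
  have hxM : x ∈ IsLocalRing.maximalIdeal O := Ideal.pow_le_self hr.ne' hxr
  rw [← addVal_eq_natCast_iff, addVal_one_add_pow_sub_one hp hn.ne' hxM, hx, nsmul_eq_mul]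
  push_cast
  ring
end
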